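/- Let h̄ be a 4×4 real symmetric invertible matrix with det(h̄^{-1}) = −1 (Minkowski normalization), define ε^{ab}_{cd} as the ε-symbol with the first two indices raised by h̄^{-1}, and let γ ∈ ℂ with γ ≠ ±i. Suppose a real tensor T^c_{ab} (antisymmetric in a,b) satisfies T^c_{ab} = (1/(2γ)) Σ_{a',b'} T^c_{a'b'} ε^{a'b'}_{ab} for all indices. Then T^c_{ab} = 0 for all indices. -/
import Mathlib


noncomputable section

/-- The completely antisymmetric symbol `ε_{abcd}` on `Fin 4` (with `ε_{0123} = 1`,
i.e. `ε_{1234} = 1` in 1-based indexing). -/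
def eps4 (a b c d : Fin 4) : ℝ :=
  ∑ σ : Equiv.Perm (Fin 4),
    if σ 0 = a ∧ σ 1 = b ∧ σ 2 = c ∧ σ 3 = d then ((Equiv.Perm.sign σ : ℤ) : ℝ) else 0

/-- `ε^{ab}_{cd} := h^{aa'} h^{bb'} ε_{a'b'cd}`, the ε-symbol with its first two indices
raised using the inverse matrix `h⁻¹`. -/
def epsUp (h : Matrix (Fin 4) (Fin 4) ℝ) (a b c d : Fin 4) : ℝ :=
  ∑ a' : Fin 4, ∑ b' : Fin 4, h⁻¹ a a' * h⁻¹ b b' * eps4 a' b' c d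

def epsZ (a b c d : Fin 4) : ℤ :=
  ∑ σ : Equiv.Perm (Fin 4),
    if σ 0 = a ∧ σ 1 = b ∧ σ 2 = c ∧ σ 3 = d then ((Equiv.Perm.sign σ : ℤ)) else 0
lemma eps4_eq (a b c d : Fin 4) : eps4 a b c d = (epsZ a b c d : ℝ) := by
  unfold eps4 epsZ
  push_cast [apply_ite (Int.cast : ℤ → ℝ)]
  rfl
lemma eps4_val (a b c d : Fin 4) (n : ℤ) (h : epsZ a b c d = n) :
    eps4 a b c d = (n : ℝ) := by rw [eps4_eq, h]

lemma det_fin_four (A : Matrix (Fin 4) (Fin 4) ℝ) :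
    A.det =
      A 0 0 * (A 1 1 * (A 2 2 * A 3 3 - A 2 3 * A 3 2)
             - A 1 2 * (A 2 1 * A 3 3 - A 2 3 * A 3 1)
             + A 1 3 * (A 2 1 * A 3 2 - A 2 2 * A 3 1))
    - A 0 1 * (A 1 0 * (A 2 2 * A 3 3 - A 2 3 * A 3 2)
             - A 1 2 * (A 2 0 * A 3 3 - A 2 3 * A 3 0)
             + A 1 3 * (A 2 0 * A 3 2 - A 2 2 * A 3 0))
    + A 0 2 * (A 1 0 * (A 2 1 * A 3 3 - A 2 3 * A 3 1)
             - A 1 1 * (A 2 0 * A 3 3 - A 2 3 * A 3 0)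
             + A 1 3 * (A 2 0 * A 3 1 - A 2 1 * A 3 0))
    - A 0 3 * (A 1 0 * (A 2 1 * A 3 2 - A 2 2 * A 3 1)
             - A 1 1 * (A 2 0 * A 3 2 - A 2 2 * A 3 0)
             + A 1 2 * (A 2 0 * A 3 1 - A 2 1 * A 3 0)) := by
  rw [Matrix.det_succ_row_zero]
  simp (config := { decide := true }) [Fin.sum_univ_four, Matrix.det_fin_three, Matrix.submatrix_apply, Fin.succAbove, show (Fin.succ 2 : Fin 4) = 3 from rfl, show (Fin.castSucc 2 : Fin 4) = 2 from rfl, show (Fin.castSucc 1 : Fin 4) = 1 from rfl, show (Fin.castSucc 0 : Fin 4) = 0 from rfl]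
  ring

lemma epsUp00 (h : Matrix (Fin 4) (Fin 4) ℝ) (x y : Fin 4) :
    epsUp h x y 0 0 = 0 := by
  simp only [epsUp, Fin.sum_univ_four,
    eps4_val 0 0 0 0 (0) (by decide),
    eps4_val 0 1 0 0 (0) (by decide),
    eps4_val 0 2 0 0 (0) (by decide),
    eps4_val 0 3 0 0 (0) (by decide),
    eps4_val 1 0 0 0 (0) (by decide),
    eps4_val 1 1 0 0 (0) (by decide),
    eps4_val 1 2 0 0 (0) (by decide),
    eps4_val 1 3 0 0 (0) (by decide),
    eps4_val 2 0 0 0 (0) (by decide),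
    eps4_val 2 1 0 0 (0) (by decide),
    eps4_val 2 2 0 0 (0) (by decide),
    eps4_val 2 3 0 0 (0) (by decide),
    eps4_val 3 0 0 0 (0) (by decide),
    eps4_val 3 1 0 0 (0) (by decide),
    eps4_val 3 2 0 0 (0) (by decide),
    eps4_val 3 3 0 0 (0) (by decide)]
  ring

lemma epsUp01 (h : Matrix (Fin 4) (Fin 4) ℝ) (x y : Fin 4) :
    epsUp h x y 0 1 = h⁻¹ x 2 * h⁻¹ y 3 -  h⁻¹ x 3 * h⁻¹ y 2 := by
  simp only [epsUp, Fin.sum_univ_four,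
    eps4_val 0 0 0 1 (0) (by decide),
    eps4_val 0 1 0 1 (0) (by decide),
    eps4_val 0 2 0 1 (0) (by decide),
    eps4_val 0 3 0 1 (0) (by decide),
    eps4_val 1 0 0 1 (0) (by decide),
    eps4_val 1 1 0 1 (0) (by decide),
    eps4_val 1 2 0 1 (0) (by decide),
    eps4_val 1 3 0 1 (0) (by decide),
    eps4_val 2 0 0 1 (0) (by decide),
    eps4_val 2 1 0 1 (0) (by decide),
    eps4_val 2 2 0 1 (0) (by decide),
    eps4_val 2 3 0 1 (1) (by decide),
    eps4_val 3 0 0 1 (0) (by decide),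
    eps4_val 3 1 0 1 (0) (by decide),
    eps4_val 3 2 0 1 (-1) (by decide),
    eps4_val 3 3 0 1 (0) (by decide)]
  ring

lemma epsUp02 (h : Matrix (Fin 4) (Fin 4) ℝ) (x y : Fin 4) :
    epsUp h x y 0 2 = - h⁻¹ x 1 * h⁻¹ y 3 + h⁻¹ x 3 * h⁻¹ y 1 := by
  simp only [epsUp, Fin.sum_univ_four,
    eps4_val 0 0 0 2 (0) (by decide),
    eps4_val 0 1 0 2 (0) (by decide),
    eps4_val 0 2 0 2 (0) (by decide),
    eps4_val 0 3 0 2 (0) (by decide),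
    eps4_val 1 0 0 2 (0) (by decide),
    eps4_val 1 1 0 2 (0) (by decide),
    eps4_val 1 2 0 2 (0) (by decide),
    eps4_val 1 3 0 2 (-1) (by decide),
    eps4_val 2 0 0 2 (0) (by decide),
    eps4_val 2 1 0 2 (0) (by decide),
    eps4_val 2 2 0 2 (0) (by decide),
    eps4_val 2 3 0 2 (0) (by decide),
    eps4_val 3 0 0 2 (0) (by decide),
    eps4_val 3 1 0 2 (1) (by decide),
    eps4_val 3 2 0 2 (0) (by decide),
    eps4_val 3 3 0 2 (0) (by decide)]
  ring

lemma epsUp03 (h : Matrix (Fin 4) (Fin 4) ℝ) (x y : Fin 4) :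
    epsUp h x y 0 3 = h⁻¹ x 1 * h⁻¹ y 2 -  h⁻¹ x 2 * h⁻¹ y 1 := by
  simp only [epsUp, Fin.sum_univ_four,
    eps4_val 0 0 0 3 (0) (by decide),
    eps4_val 0 1 0 3 (0) (by decide),
    eps4_val 0 2 0 3 (0) (by decide),
    eps4_val 0 3 0 3 (0) (by decide),
    eps4_val 1 0 0 3 (0) (by decide),
    eps4_val 1 1 0 3 (0) (by decide),
    eps4_val 1 2 0 3 (1) (by decide),
    eps4_val 1 3 0 3 (0) (by decide),
    eps4_val 2 0 0 3 (0) (by decide),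
    eps4_val 2 1 0 3 (-1) (by decide),
    eps4_val 2 2 0 3 (0) (by decide),
    eps4_val 2 3 0 3 (0) (by decide),
    eps4_val 3 0 0 3 (0) (by decide),
    eps4_val 3 1 0 3 (0) (by decide),
    eps4_val 3 2 0 3 (0) (by decide),
    eps4_val 3 3 0 3 (0) (by decide)]
  ring

lemma epsUp10 (h : Matrix (Fin 4) (Fin 4) ℝ) (x y : Fin 4) :
    epsUp h x y 1 0 = - h⁻¹ x 2 * h⁻¹ y 3 + h⁻¹ x 3 * h⁻¹ y 2 := by
  simp only [epsUp, Fin.sum_univ_four,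
    eps4_val 0 0 1 0 (0) (by decide),
    eps4_val 0 1 1 0 (0) (by decide),
    eps4_val 0 2 1 0 (0) (by decide),
    eps4_val 0 3 1 0 (0) (by decide),
    eps4_val 1 0 1 0 (0) (by decide),
    eps4_val 1 1 1 0 (0) (by decide),
    eps4_val 1 2 1 0 (0) (by decide),
    eps4_val 1 3 1 0 (0) (by decide),
    eps4_val 2 0 1 0 (0) (by decide),
    eps4_val 2 1 1 0 (0) (by decide),
    eps4_val 2 2 1 0 (0) (by decide),
    eps4_val 2 3 1 0 (-1) (by decide),
    eps4_val 3 0 1 0 (0) (by decide),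
    eps4_val 3 1 1 0 (0) (by decide),
    eps4_val 3 2 1 0 (1) (by decide),
    eps4_val 3 3 1 0 (0) (by decide)]
  ring

lemma epsUp11 (h : Matrix (Fin 4) (Fin 4) ℝ) (x y : Fin 4) :
    epsUp h x y 1 1 = 0 := by
  simp only [epsUp, Fin.sum_univ_four,
    eps4_val 0 0 1 1 (0) (by decide),
    eps4_val 0 1 1 1 (0) (by decide),
    eps4_val 0 2 1 1 (0) (by decide),
    eps4_val 0 3 1 1 (0) (by decide),
    eps4_val 1 0 1 1 (0) (by decide),
    eps4_val 1 1 1 1 (0) (by decide),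
    eps4_val 1 2 1 1 (0) (by decide),
    eps4_val 1 3 1 1 (0) (by decide),
    eps4_val 2 0 1 1 (0) (by decide),
    eps4_val 2 1 1 1 (0) (by decide),
    eps4_val 2 2 1 1 (0) (by decide),
    eps4_val 2 3 1 1 (0) (by decide),
    eps4_val 3 0 1 1 (0) (by decide),
    eps4_val 3 1 1 1 (0) (by decide),
    eps4_val 3 2 1 1 (0) (by decide),
    eps4_val 3 3 1 1 (0) (by decide)]
  ring

lemma epsUp12 (h : Matrix (Fin 4) (Fin 4) ℝ) (x y : Fin 4) :
    epsUp h x y 1 2 = h⁻¹ x 0 * h⁻¹ y 3 -  h⁻¹ x 3 * h⁻¹ y 0 := by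
  simp only [epsUp, Fin.sum_univ_four,
    eps4_val 0 0 1 2 (0) (by decide),
    eps4_val 0 1 1 2 (0) (by decide),
    eps4_val 0 2 1 2 (0) (by decide),
    eps4_val 0 3 1 2 (1) (by decide),
    eps4_val 1 0 1 2 (0) (by decide),
    eps4_val 1 1 1 2 (0) (by decide),
    eps4_val 1 2 1 2 (0) (by decide),
    eps4_val 1 3 1 2 (0) (by decide),
    eps4_val 2 0 1 2 (0) (by decide),
    eps4_val 2 1 1 2 (0) (by decide),
    eps4_val 2 2 1 2 (0) (by decide),
    eps4_val 2 3 1 2 (0) (by decide),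
    eps4_val 3 0 1 2 (-1) (by decide),
    eps4_val 3 1 1 2 (0) (by decide),
    eps4_val 3 2 1 2 (0) (by decide),
    eps4_val 3 3 1 2 (0) (by decide)]
  ring

lemma epsUp13 (h : Matrix (Fin 4) (Fin 4) ℝ) (x y : Fin 4) :
    epsUp h x y 1 3 = - h⁻¹ x 0 * h⁻¹ y 2 + h⁻¹ x 2 * h⁻¹ y 0 := by
  simp only [epsUp, Fin.sum_univ_four,
    eps4_val 0 0 1 3 (0) (by decide),
    eps4_val 0 1 1 3 (0) (by decide),
    eps4_val 0 2 1 3 (-1) (by decide),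
    eps4_val 0 3 1 3 (0) (by decide),
    eps4_val 1 0 1 3 (0) (by decide),
    eps4_val 1 1 1 3 (0) (by decide),
    eps4_val 1 2 1 3 (0) (by decide),
    eps4_val 1 3 1 3 (0) (by decide),
    eps4_val 2 0 1 3 (1) (by decide),
    eps4_val 2 1 1 3 (0) (by decide),
    eps4_val 2 2 1 3 (0) (by decide),
    eps4_val 2 3 1 3 (0) (by decide),
    eps4_val 3 0 1 3 (0) (by decide),
    eps4_val 3 1 1 3 (0) (by decide),
    eps4_val 3 2 1 3 (0) (by decide),
    eps4_val 3 3 1 3 (0) (by decide)]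
  ring

lemma epsUp20 (h : Matrix (Fin 4) (Fin 4) ℝ) (x y : Fin 4) :
    epsUp h x y 2 0 = h⁻¹ x 1 * h⁻¹ y 3 -  h⁻¹ x 3 * h⁻¹ y 1 := by
  simp only [epsUp, Fin.sum_univ_four,
    eps4_val 0 0 2 0 (0) (by decide),
    eps4_val 0 1 2 0 (0) (by decide),
    eps4_val 0 2 2 0 (0) (by decide),
    eps4_val 0 3 2 0 (0) (by decide),
    eps4_val 1 0 2 0 (0) (by decide),
    eps4_val 1 1 2 0 (0) (by decide),
    eps4_val 1 2 2 0 (0) (by decide),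
    eps4_val 1 3 2 0 (1) (by decide),
    eps4_val 2 0 2 0 (0) (by decide),
    eps4_val 2 1 2 0 (0) (by decide),
    eps4_val 2 2 2 0 (0) (by decide),
    eps4_val 2 3 2 0 (0) (by decide),
    eps4_val 3 0 2 0 (0) (by decide),
    eps4_val 3 1 2 0 (-1) (by decide),
    eps4_val 3 2 2 0 (0) (by decide),
    eps4_val 3 3 2 0 (0) (by decide)]
  ring

lemma epsUp21 (h : Matrix (Fin 4) (Fin 4) ℝ) (x y : Fin 4) :
    epsUp h x y 2 1 = - h⁻¹ x 0 * h⁻¹ y 3 + h⁻¹ x 3 * h⁻¹ y 0 := by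
  simp only [epsUp, Fin.sum_univ_four,
    eps4_val 0 0 2 1 (0) (by decide),
    eps4_val 0 1 2 1 (0) (by decide),
    eps4_val 0 2 2 1 (0) (by decide),
    eps4_val 0 3 2 1 (-1) (by decide),
    eps4_val 1 0 2 1 (0) (by decide),
    eps4_val 1 1 2 1 (0) (by decide),
    eps4_val 1 2 2 1 (0) (by decide),
    eps4_val 1 3 2 1 (0) (by decide),
    eps4_val 2 0 2 1 (0) (by decide),
    eps4_val 2 1 2 1 (0) (by decide),
    eps4_val 2 2 2 1 (0) (by decide),
    eps4_val 2 3 2 1 (0) (by decide),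
    eps4_val 3 0 2 1 (1) (by decide),
    eps4_val 3 1 2 1 (0) (by decide),
    eps4_val 3 2 2 1 (0) (by decide),
    eps4_val 3 3 2 1 (0) (by decide)]
  ring

lemma epsUp22 (h : Matrix (Fin 4) (Fin 4) ℝ) (x y : Fin 4) :
    epsUp h x y 2 2 = 0 := by
  simp only [epsUp, Fin.sum_univ_four,
    eps4_val 0 0 2 2 (0) (by decide),
    eps4_val 0 1 2 2 (0) (by decide),
    eps4_val 0 2 2 2 (0) (by decide),
    eps4_val 0 3 2 2 (0) (by decide),
    eps4_val 1 0 2 2 (0) (by decide),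
    eps4_val 1 1 2 2 (0) (by decide),
    eps4_val 1 2 2 2 (0) (by decide),
    eps4_val 1 3 2 2 (0) (by decide),
    eps4_val 2 0 2 2 (0) (by decide),
    eps4_val 2 1 2 2 (0) (by decide),
    eps4_val 2 2 2 2 (0) (by decide),
    eps4_val 2 3 2 2 (0) (by decide),
    eps4_val 3 0 2 2 (0) (by decide),
    eps4_val 3 1 2 2 (0) (by decide),
    eps4_val 3 2 2 2 (0) (by decide),
    eps4_val 3 3 2 2 (0) (by decide)]
  ring

lemma epsUp23 (h : Matrix (Fin 4) (Fin 4) ℝ) (x y : Fin 4) :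
    epsUp h x y 2 3 = h⁻¹ x 0 * h⁻¹ y 1 -  h⁻¹ x 1 * h⁻¹ y 0 := by
  simp only [epsUp, Fin.sum_univ_four,
    eps4_val 0 0 2 3 (0) (by decide),
    eps4_val 0 1 2 3 (1) (by decide),
    eps4_val 0 2 2 3 (0) (by decide),
    eps4_val 0 3 2 3 (0) (by decide),
    eps4_val 1 0 2 3 (-1) (by decide),
    eps4_val 1 1 2 3 (0) (by decide),
    eps4_val 1 2 2 3 (0) (by decide),
    eps4_val 1 3 2 3 (0) (by decide),
    eps4_val 2 0 2 3 (0) (by decide),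
    eps4_val 2 1 2 3 (0) (by decide),
    eps4_val 2 2 2 3 (0) (by decide),
    eps4_val 2 3 2 3 (0) (by decide),
    eps4_val 3 0 2 3 (0) (by decide),
    eps4_val 3 1 2 3 (0) (by decide),
    eps4_val 3 2 2 3 (0) (by decide),
    eps4_val 3 3 2 3 (0) (by decide)]
  ring

lemma epsUp30 (h : Matrix (Fin 4) (Fin 4) ℝ) (x y : Fin 4) :
    epsUp h x y 3 0 = - h⁻¹ x 1 * h⁻¹ y 2 + h⁻¹ x 2 * h⁻¹ y 1 := by
  simp only [epsUp, Fin.sum_univ_four,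
    eps4_val 0 0 3 0 (0) (by decide),
    eps4_val 0 1 3 0 (0) (by decide),
    eps4_val 0 2 3 0 (0) (by decide),
    eps4_val 0 3 3 0 (0) (by decide),
    eps4_val 1 0 3 0 (0) (by decide),
    eps4_val 1 1 3 0 (0) (by decide),
    eps4_val 1 2 3 0 (-1) (by decide),
    eps4_val 1 3 3 0 (0) (by decide),
    eps4_val 2 0 3 0 (0) (by decide),
    eps4_val 2 1 3 0 (1) (by decide),
    eps4_val 2 2 3 0 (0) (by decide),
    eps4_val 2 3 3 0 (0) (by decide),
    eps4_val 3 0 3 0 (0) (by decide),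
    eps4_val 3 1 3 0 (0) (by decide),
    eps4_val 3 2 3 0 (0) (by decide),
    eps4_val 3 3 3 0 (0) (by decide)]
  ring

lemma epsUp31 (h : Matrix (Fin 4) (Fin 4) ℝ) (x y : Fin 4) :
    epsUp h x y 3 1 = h⁻¹ x 0 * h⁻¹ y 2 -  h⁻¹ x 2 * h⁻¹ y 0 := by
  simp only [epsUp, Fin.sum_univ_four,
    eps4_val 0 0 3 1 (0) (by decide),
    eps4_val 0 1 3 1 (0) (by decide),
    eps4_val 0 2 3 1 (1) (by decide),
    eps4_val 0 3 3 1 (0) (by decide),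
    eps4_val 1 0 3 1 (0) (by decide),
    eps4_val 1 1 3 1 (0) (by decide),
    eps4_val 1 2 3 1 (0) (by decide),
    eps4_val 1 3 3 1 (0) (by decide),
    eps4_val 2 0 3 1 (-1) (by decide),
    eps4_val 2 1 3 1 (0) (by decide),
    eps4_val 2 2 3 1 (0) (by decide),
    eps4_val 2 3 3 1 (0) (by decide),
    eps4_val 3 0 3 1 (0) (by decide),
    eps4_val 3 1 3 1 (0) (by decide),
    eps4_val 3 2 3 1 (0) (by decide),
    eps4_val 3 3 3 1 (0) (by decide)]
  ring

lemma epsUp32 (h : Matrix (Fin 4) (Fin 4) ℝ) (x y : Fin 4) :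
    epsUp h x y 3 2 = - h⁻¹ x 0 * h⁻¹ y 1 + h⁻¹ x 1 * h⁻¹ y 0 := by
  simp only [epsUp, Fin.sum_univ_four,
    eps4_val 0 0 3 2 (0) (by decide),
    eps4_val 0 1 3 2 (-1) (by decide),
    eps4_val 0 2 3 2 (0) (by decide),
    eps4_val 0 3 3 2 (0) (by decide),
    eps4_val 1 0 3 2 (1) (by decide),
    eps4_val 1 1 3 2 (0) (by decide),
    eps4_val 1 2 3 2 (0) (by decide),
    eps4_val 1 3 3 2 (0) (by decide),
    eps4_val 2 0 3 2 (0) (by decide),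
    eps4_val 2 1 3 2 (0) (by decide),
    eps4_val 2 2 3 2 (0) (by decide),
    eps4_val 2 3 3 2 (0) (by decide),
    eps4_val 3 0 3 2 (0) (by decide),
    eps4_val 3 1 3 2 (0) (by decide),
    eps4_val 3 2 3 2 (0) (by decide),
    eps4_val 3 3 3 2 (0) (by decide)]
  ring

lemma epsUp33 (h : Matrix (Fin 4) (Fin 4) ℝ) (x y : Fin 4) :
    epsUp h x y 3 3 = 0 := by
  simp only [epsUp, Fin.sum_univ_four,
    eps4_val 0 0 3 3 (0) (by decide),
    eps4_val 0 1 3 3 (0) (by decide),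
    eps4_val 0 2 3 3 (0) (by decide),
    eps4_val 0 3 3 3 (0) (by decide),
    eps4_val 1 0 3 3 (0) (by decide),
    eps4_val 1 1 3 3 (0) (by decide),
    eps4_val 1 2 3 3 (0) (by decide),
    eps4_val 1 3 3 3 (0) (by decide),
    eps4_val 2 0 3 3 (0) (by decide),
    eps4_val 2 1 3 3 (0) (by decide),
    eps4_val 2 2 3 3 (0) (by decide),
    eps4_val 2 3 3 3 (0) (by decide),
    eps4_val 3 0 3 3 (0) (by decide),
    eps4_val 3 1 3 3 (0) (by decide),
    eps4_val 3 2 3 3 (0) (by decide),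
    eps4_val 3 3 3 3 (0) (by decide)]
  ring

lemma finmk0 (p : 0 < 4) : (⟨0, p⟩ : Fin 4) = 0 := rfl
lemma finmk1 (p : 1 < 4) : (⟨1, p⟩ : Fin 4) = 1 := rfl
lemma finmk2 (p : 2 < 4) : (⟨2, p⟩ : Fin 4) = 2 := rfl
lemma finmk3 (p : 3 < 4) : (⟨3, p⟩ : Fin 4) = 3 := rfl

set_option maxHeartbeats 4000000 in
lemma key (h : Matrix (Fin 4) (Fin 4) ℝ)
    (s10 : h⁻¹ 1 0 = h⁻¹ 0 1) (s20 : h⁻¹ 2 0 = h⁻¹ 0 2) (s21 : h⁻¹ 2 1 = h⁻¹ 1 2)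
    (s30 : h⁻¹ 3 0 = h⁻¹ 0 3) (s31 : h⁻¹ 3 1 = h⁻¹ 1 3) (s32 : h⁻¹ 3 2 = h⁻¹ 2 3)
    (hdet : (h⁻¹).det = -1) (x y a b : Fin 4) :
    ∑ p : Fin 4, ∑ q : Fin 4, epsUp h x y p q * epsUp h p q a b =
      -2 * ((if x = a then (1:ℝ) else 0) * (if y = b then 1 else 0)
          - (if x = b then (1:ℝ) else 0) * (if y = a then 1 else 0)) := by
  rw [det_fin_four] at hdet
  simp only [s10, s20, s21, s30, s31, s32] at hdet
  fin_cases x <;> fin_cases y <;> fin_cases a <;> fin_cases b <;>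
    simp only [finmk0, finmk1, finmk2, finmk3, Fin.sum_univ_four, Fin.isValue,
      epsUp00, epsUp01, epsUp02, epsUp03,
      epsUp10, epsUp11, epsUp12, epsUp13, epsUp20, epsUp21, epsUp22, epsUp23,
      epsUp30, epsUp31, epsUp32, epsUp33, s10, s20, s21, s30, s31, s32,
      Fin.reduceEq, reduceIte, if_true, mul_zero, zero_mul, mul_one, one_mul,
      sub_zero, zero_sub, add_zero, zero_add, neg_zero, mul_neg, neg_neg] <;>
    first
      | linear_combination (0:ℝ) * hdet
      | linear_combination (-2:ℝ) * hdet
      | linear_combination (2:ℝ) * hdet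

set_option maxHeartbeats 1000000 in
lemma swap_lemma (h : Matrix (Fin 4) (Fin 4) ℝ) (γ : ℂ) (S : Fin 4 → Fin 4 → ℂ)
    (a b : Fin 4) :
    ∑ p : Fin 4, ∑ q : Fin 4,
        ((1/(2*γ)) * ∑ x : Fin 4, ∑ y : Fin 4, S x y * (epsUp h x y p q : ℂ))
          * (epsUp h p q a b : ℂ)
      = (1/(2*γ)) * ∑ x : Fin 4, ∑ y : Fin 4, S x y *
          ((∑ p : Fin 4, ∑ q : Fin 4, epsUp h x y p q * epsUp h p q a b : ℝ) : ℂ) := by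
  push_cast
  simp only [Fin.sum_univ_four]
  ring

/-- Let `h̄` be a symmetric invertible real `4 × 4` matrix with
`det(h̄⁻¹) = −1` (Minkowski normalisation) and let `γ ∈ ℂ`, `γ ≠ ± i`.  If a real tensor
`T^c_{ab}`, antisymmetric in `(a,b)`, satisfies
`T^c_{ab} = (1/(2γ)) ∑_{a',b'} T^c_{a'b'} ε^{a'b'}_{ab}`, then `T = 0`. -/
theorem statement_17 (h : Matrix (Fin 4) (Fin 4) ℝ)
    (hsymm : h.IsSymm) (hinv : IsUnit h.det) (hdet : (h⁻¹).det = -1)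
    (γ : ℂ) (hγ : γ ≠ Complex.I) (hγ' : γ ≠ -Complex.I)
    (T : Fin 4 → Fin 4 → Fin 4 → ℝ)
    (hanti : ∀ c a b, T c a b = -T c b a)
    (hT : ∀ c a b, (T c a b : ℂ)
        = (1 / (2 * γ)) *
            ∑ a' : Fin 4, ∑ b' : Fin 4, (T c a' b' : ℂ) * (epsUp h a' b' a b : ℂ)) :
    ∀ c a b, T c a b = 0 := by
  have hsinv : (h⁻¹).IsSymm := by
    unfold Matrix.IsSymm at *
    rw [Matrix.transpose_nonsing_inv, hsymm]
  have s10 := hsinv.apply 0 1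
  have s20 := hsinv.apply 0 2
  have s21 := hsinv.apply 1 2
  have s30 := hsinv.apply 0 3
  have s31 := hsinv.apply 1 3
  have s32 := hsinv.apply 2 3
  intro c a b
  by_cases hγ0 : γ = 0
  · have e := hT c a b
    rw [hγ0] at e
    norm_num at e
    exact_mod_cast e
  · have K : ∀ x y a b : Fin 4,
        ((∑ p : Fin 4, ∑ q : Fin 4, epsUp h x y p q * epsUp h p q a b : ℝ) : ℂ)
          = -2 * ((if x = a then (1:ℂ) else 0) * (if y = b then 1 else 0)
               - (if x = b then (1:ℂ) else 0) * (if y = a then 1 else 0)) := by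
      intro x y a b
      rw [key h s10 s20 s21 s30 s31 s32 hdet x y a b]
      push_cast [apply_ite (Complex.ofReal)]
      norm_num
    have hc : ∀ i j, (T c i j : ℂ) = -(T c j i : ℂ) := fun i j => by
      exact_mod_cast congrArg (Complex.ofReal) (hanti c i j)
    have big : ∀ a b : Fin 4, (∑ x : Fin 4, ∑ y : Fin 4, (T c x y : ℂ) *
          ((∑ p : Fin 4, ∑ q : Fin 4, epsUp h x y p q * epsUp h p q a b : ℝ) : ℂ))
        = -4 * (T c a b : ℂ) := by
      intro a b
      simp only [K]
      fin_cases a <;> fin_cases b <;>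
        simp only [finmk0, finmk1, finmk2, finmk3, Fin.sum_univ_four, Fin.isValue,
          Fin.reduceEq, reduceIte, if_true, mul_zero, zero_mul, mul_one, one_mul,
          sub_zero, zero_sub, add_zero, zero_add, neg_zero, mul_neg, neg_neg] <;>
        first
          | ring1
          | linear_combination (2:ℂ) * hc 0 0
          | linear_combination (-2:ℂ) * hc 0 0
          | linear_combination (2:ℂ) * hc 0 1
          | linear_combination (-2:ℂ) * hc 0 1
          | linear_combination (2:ℂ) * hc 0 2
          | linear_combination (-2:ℂ) * hc 0 2
          | linear_combination (2:ℂ) * hc 0 3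
          | linear_combination (-2:ℂ) * hc 0 3
          | linear_combination (2:ℂ) * hc 1 0
          | linear_combination (-2:ℂ) * hc 1 0
          | linear_combination (2:ℂ) * hc 1 1
          | linear_combination (-2:ℂ) * hc 1 1
          | linear_combination (2:ℂ) * hc 1 2
          | linear_combination (-2:ℂ) * hc 1 2
          | linear_combination (2:ℂ) * hc 1 3
          | linear_combination (-2:ℂ) * hc 1 3
          | linear_combination (2:ℂ) * hc 2 0
          | linear_combination (-2:ℂ) * hc 2 0
          | linear_combination (2:ℂ) * hc 2 1
          | linear_combination (-2:ℂ) * hc 2 1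
          | linear_combination (2:ℂ) * hc 2 2
          | linear_combination (-2:ℂ) * hc 2 2
          | linear_combination (2:ℂ) * hc 2 3
          | linear_combination (-2:ℂ) * hc 2 3
          | linear_combination (2:ℂ) * hc 3 0
          | linear_combination (-2:ℂ) * hc 3 0
          | linear_combination (2:ℂ) * hc 3 1
          | linear_combination (-2:ℂ) * hc 3 1
          | linear_combination (2:ℂ) * hc 3 2
          | linear_combination (-2:ℂ) * hc 3 2
          | linear_combination (2:ℂ) * hc 3 3
          | linear_combination (-2:ℂ) * hc 3 3
    have e3 : (T c a b : ℂ) = (1/(2*γ)) * ((1/(2*γ)) *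
        ∑ x : Fin 4, ∑ y : Fin 4, (T c x y : ℂ) *
          ((∑ p : Fin 4, ∑ q : Fin 4, epsUp h x y p q * epsUp h p q a b : ℝ) : ℂ)) := by
      rw [hT c a b]
      rw [← swap_lemma h γ (fun x y => (T c x y : ℂ)) a b]
      congr 1
      exact Finset.sum_congr rfl fun p _ => Finset.sum_congr rfl fun q _ => by
        rw [← hT c p q]
    rw [big a b] at e3
    have hne : γ^2 + 1 ≠ 0 := by
      intro hcon
      rcases mul_eq_zero.1 (show (γ - Complex.I) * (γ + Complex.I) = 0 by
        linear_combination hcon - Complex.I_sq) with h1 | h1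
      · exact hγ (by linear_combination h1)
      · exact hγ' (by linear_combination h1)
    have h2 : (2*γ) ≠ 0 := mul_ne_zero two_ne_zero hγ0
    field_simp at e3
    have e5 : (γ^2+1) * (T c a b : ℂ) = 0 := by linear_combination ((1:ℂ)/4) * e3
    rcases mul_eq_zero.1 e5 with h1 | h1
    · exact absurd h1 hne
    · exact_mod_cast h1

end
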